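/- Let p be an orthogonal partition of 2n all of whose parts are even (so every part occurs with even multiplicity). Then the Sp_{2n}-collapse of p^{+-} equals p itself: (p^{+-})_{Sp_{2n}} = p. -/

import Mathlib

/-! All parts of `p` being even, `p` is symplectic, and moving one box from the smallest part to
the largest gives `p ≤ p^{+-}`; so `p ≤ c` by maximality of the collapse `c`. Conversely every
partial sum `c_1 + ⋯ + c_m` exceeds that of `p` by at most one, and those of `p` are even. For a
symplectic partition an odd partial sum forces `c_{m+1} = c_m`, which turns a first excess of one
into an excess of two at `m + 1`. Hence `c ≤ p`, and `c = p` by antisymmetry of dominance. -/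

namespace JiangWF

/-- `sCount p i` : the number of parts of `p` that are `≥ i`. -/
def sCount (p : Multiset ℕ) (i : ℕ) : ℕ := (p.filter (fun a => i ≤ a)).card

/-- `rCount p i` : the number of parts of `p` equal to `i`. -/
def rCount (p : Multiset ℕ) (i : ℕ) : ℕ := p.count i

/-- The largest part of `p` (`0` for the empty partition). -/
def maxPart (p : Multiset ℕ) : ℕ := p.sup

/-- The smallest part of `p` (`0` for the empty partition). -/
noncomputable def minPart (p : Multiset ℕ) : ℕ := sInf {a : ℕ | a ∈ p}

/-- The transpose partition: its `i`-th part is `sCount p i`, for `1 ≤ i ≤ maxPart p`. -/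
def transpose (p : Multiset ℕ) : Multiset ℕ :=
  (Multiset.range (maxPart p)).map fun i => sCount p (i + 1)

/-- The sum of the `m` largest parts of `p`. -/
def topSum (p : Multiset ℕ) (m : ℕ) : ℕ :=
  ∑ i ∈ Finset.Icc 1 p.sum, min m (sCount p i)

/-- Dominance order: `domLE p q` means `p ≤ q`. -/
def domLE (p q : Multiset ℕ) : Prop := ∀ m, topSum p m ≤ topSum q m

/-- `p` is a partition of `N`: all parts positive, summing to `N`. -/
def IsPartitionOf (p : Multiset ℕ) (N : ℕ) : Prop := (∀ a ∈ p, 0 < a) ∧ p.sum = N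

/-- Symplectic partition: every odd part occurs with even multiplicity. -/
def IsSymplectic (p : Multiset ℕ) : Prop := ∀ a, a % 2 = 1 → Even (p.count a)

/-- Orthogonal partition: every even part occurs with even multiplicity. -/
def IsOrthogonal (p : Multiset ℕ) : Prop := ∀ a, a % 2 = 0 → Even (p.count a)

/-- `p^-`: decrease the smallest part by one (deleting it if it becomes `0`). -/
noncomputable def pMinus (p : Multiset ℕ) : Multiset ℕ :=
  if minPart p ≤ 1 then p.erase (minPart p)
  else (minPart p - 1) ::ₘ p.erase (minPart p)

/-- `p^+`: increase the largest part by one. -/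
def pPlus (p : Multiset ℕ) : Multiset ℕ := (maxPart p + 1) ::ₘ p.erase (maxPart p)

/-- `p^{+-}`: increase the largest part by one and decrease the smallest by one. -/
noncomputable def pPM (p : Multiset ℕ) : Multiset ℕ := pMinus (pPlus p)

/-- `p₁ = [⌊b_1/2⌋^{a_1} ⋯ ⌊b_r/2⌋^{a_r}]^t` (discarding zero entries before transposing). -/
def pOne (p : Multiset ℕ) : Multiset ℕ :=
  transpose ((p.map fun b => b / 2).filter fun x => 0 < x)

/-- `Σ_{i : b_i odd} a_i`: the number of odd parts of `p`. -/
def oddMult (p : Multiset ℕ) : ℕ := (p.filter fun a => a % 2 = 1).card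

/-- `n* = ⌊(Σ_{i : b_i odd} a_i)/2⌋`. -/
def nStar (p : Multiset ℕ) : ℕ := oddMult p / 2

/-- Append an extra part `m` to `q`, omitted if `m = 0`. -/
def addPart (m : ℕ) (q : Multiset ℕ) : Multiset ℕ := if m = 0 then q else m ::ₘ q

/-- `c` is the `Sp`-collapse of `p`: the maximal symplectic partition `≤ p` in dominance. -/
def IsSpCollapse (p c : Multiset ℕ) : Prop :=
  IsPartitionOf c p.sum ∧ IsSymplectic c ∧ domLE c p ∧
    ∀ c', IsPartitionOf c' p.sum → IsSymplectic c' → domLE c' p → domLE c' c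

/-- `c` is the `SO`-collapse of `p`: the maximal orthogonal partition `≤ p` in dominance. -/
def IsSOCollapse (p c : Multiset ℕ) : Prop :=
  IsPartitionOf c p.sum ∧ IsOrthogonal c ∧ domLE c p ∧
    ∀ c', IsPartitionOf c' p.sum → IsOrthogonal c' → domLE c' p → domLE c' c

/-- `e` is the `Sp`-expansion of `p`: the minimal special symplectic partition `≥ p`. -/
def IsSpExpansion (p e : Multiset ℕ) : Prop :=
  IsPartitionOf e p.sum ∧ IsSymplectic e ∧ IsSymplectic (transpose e) ∧ domLE p e ∧
    ∀ e', IsPartitionOf e' p.sum → IsSymplectic e' → IsSymplectic (transpose e') →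
      domLE p e' → domLE e e'

/-- `e` is the `SO_{2n+1}`-expansion of `p`: the minimal special orthogonal partition `≥ p`
(odd case: special means the transpose is orthogonal). -/
def IsSOOddExpansion (p e : Multiset ℕ) : Prop :=
  IsPartitionOf e p.sum ∧ IsOrthogonal e ∧ IsOrthogonal (transpose e) ∧ domLE p e ∧
    ∀ e', IsPartitionOf e' p.sum → IsOrthogonal e' → IsOrthogonal (transpose e') →
      domLE p e' → domLE e e'

/-- `e` is the `SO_{2n}`-expansion of `p`: the minimal special orthogonal partition `≥ p`
(even case: special means the transpose is symplectic). -/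
def IsSOEvenExpansion (p e : Multiset ℕ) : Prop :=
  IsPartitionOf e p.sum ∧ IsOrthogonal e ∧ IsSymplectic (transpose e) ∧ domLE p e ∧
    ∀ e', IsPartitionOf e' p.sum → IsOrthogonal e' → IsSymplectic (transpose e') →
      domLE p e' → domLE e e'

/-- `dim_C(q)` for a symplectic partition `q` of `2k`:
`2k² + k − (1/2)Σ s_i(q)² − (1/2)Σ_{i odd} r_i(q)` (note `2k² + k = (|q|² + |q|)/2`). -/
def dimC (p : Multiset ℕ) : ℚ :=
  ((p.sum : ℚ) ^ 2 + (p.sum : ℚ)) / 2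
    - (∑ i ∈ Finset.Icc 1 p.sum, (sCount p i : ℚ) ^ 2) / 2
    - (∑ i ∈ Finset.Icc 1 p.sum, if i % 2 = 1 then (rCount p i : ℚ) else 0) / 2

/-- `dim_B(q)` for an orthogonal partition `q` of `2k+1`:
`2k² + k − (1/2)Σ s_i(q)² + (1/2)Σ_{i odd} r_i(q)` (note `2k² + k = (|q|² − |q|)/2`). -/
def dimB (p : Multiset ℕ) : ℚ :=
  ((p.sum : ℚ) ^ 2 - (p.sum : ℚ)) / 2
    - (∑ i ∈ Finset.Icc 1 p.sum, (sCount p i : ℚ) ^ 2) / 2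
    + (∑ i ∈ Finset.Icc 1 p.sum, if i % 2 = 1 then (rCount p i : ℚ) else 0) / 2

/-- `dim_D(q)` for an orthogonal partition `q` of `2k`:
`2k² − k − (1/2)Σ s_i(q)² + (1/2)Σ_{i odd} r_i(q)` (note `2k² − k = (|q|² − |q|)/2`). -/
def dimD (p : Multiset ℕ) : ℚ :=
  ((p.sum : ℚ) ^ 2 - (p.sum : ℚ)) / 2
    - (∑ i ∈ Finset.Icc 1 p.sum, (sCount p i : ℚ) ^ 2) / 2
    + (∑ i ∈ Finset.Icc 1 p.sum, if i % 2 = 1 then (rCount p i : ℚ) else 0) / 2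

section sCount

lemma sCount_cons (a : ℕ) (q : Multiset ℕ) (i : ℕ) :
    sCount (a ::ₘ q) i = (if i ≤ a then 1 else 0) + sCount q i := by
  simp only [sCount, Multiset.filter_cons]
  split_ifs <;> simp [add_comm]

lemma sCount_antitone (q : Multiset ℕ) : Antitone (sCount q) := fun _ _ hij =>
  Multiset.card_le_card (Multiset.monotone_filter_right q fun _ h => hij.trans h)

lemma sCount_eq_count_add (q : Multiset ℕ) (a : ℕ) :
    sCount q a = q.count a + sCount q (a + 1) := by
  induction q using Multiset.induction_on with
  | empty => rfl
  | cons x q ih =>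
    rw [sCount_cons, sCount_cons, Multiset.count_cons]
    split_ifs <;> omega

lemma sCount_le_card (q : Multiset ℕ) (i : ℕ) : sCount q i ≤ Multiset.card q :=
  Multiset.card_le_card (Multiset.filter_le _ _)

lemma sCount_eq_zero_of_sum_lt {q : Multiset ℕ} {i : ℕ} (hi : q.sum < i) : sCount q i = 0 :=
  Multiset.card_eq_zero.mpr <| Multiset.filter_eq_nil.mpr fun _ ha h =>
    (hi.trans_le h).not_ge (Multiset.le_sum_of_mem ha)

lemma sCount_filter_le (q : Multiset ℕ) (v i : ℕ) :
    sCount (q.filter (v ≤ ·)) i = sCount q (max v i) := by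
  simp only [sCount, Multiset.filter_filter, max_le_iff, and_comm]

lemma sum_sCount {q : Multiset ℕ} {S : ℕ} (hS : ∀ a ∈ q, a ≤ S) :
    ∑ i ∈ Finset.Icc 1 S, sCount q i = q.sum := by
  induction q using Multiset.induction_on with
  | empty => simp [sCount]
  | cons a q ih =>
    have hcol : ∑ i ∈ Finset.Icc 1 S, (if i ≤ a then 1 else 0) = a := by
      rw [← Finset.card_filter, show (Finset.Icc 1 S).filter (· ≤ a) = Finset.Icc 1 a by
        ext i; simp only [Finset.mem_filter, Finset.mem_Icc]; have := hS a (Multiset.mem_cons_self a q); omega]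
      simp
    simp only [sCount_cons, Finset.sum_add_distrib, Multiset.sum_cons, hcol,
      ih fun b hb => hS b (Multiset.mem_cons_of_mem hb)]

end sCount

section part

/-- The `m`-th largest part of `q` for `m ≥ 1` (`0` if `q` has fewer than `m` parts). -/
def part (q : Multiset ℕ) (m : ℕ) : ℕ := Nat.findGreatest (fun i => m ≤ sCount q i) q.sum

lemma part_zero (q : Multiset ℕ) : part q 0 = q.sum :=
  Nat.findGreatest_eq (Nat.zero_le _)

lemma part_antitone (q : Multiset ℕ) : Antitone (part q) := fun _ _ hmk =>
  Nat.findGreatest_mono_left (fun _ h => hmk.trans h) _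

lemma le_sCount_iff_le_part {q : Multiset ℕ} {m i : ℕ} (hm : 0 < m) (hi : 0 < i) :
    m ≤ sCount q i ↔ i ≤ part q m := by
  constructor
  · intro h
    refine Nat.le_findGreatest (not_lt.mp fun hlt => ?_) h
    rw [sCount_eq_zero_of_sum_lt hlt] at h
    omega
  · intro h
    have hpart : m ≤ sCount q (part q m) :=
      Nat.findGreatest_of_ne_zero (P := fun i => m ≤ sCount q i) rfl (by omega)
    exact hpart.trans (sCount_antitone q h)

lemma topSum_succ (q : Multiset ℕ) (m : ℕ) :
    topSum q (m + 1) = topSum q m + part q (m + 1) := by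
  have hfilter : (Finset.Icc 1 q.sum).filter (fun i => m + 1 ≤ sCount q i) =
      Finset.Icc 1 (part q (m + 1)) := by
    ext i
    simp only [Finset.mem_filter, Finset.mem_Icc]
    have hle : part q (m + 1) ≤ q.sum := Nat.findGreatest_le _
    constructor
    · rintro ⟨⟨hi, -⟩, h⟩
      exact ⟨hi, (le_sCount_iff_le_part (by omega) hi).mp h⟩
    · rintro ⟨hi, h⟩
      exact ⟨⟨hi, h.trans hle⟩, (le_sCount_iff_le_part (by omega) hi).mpr h⟩
  have hcol : ∀ s, min (m + 1) s = min m s + if m + 1 ≤ s then 1 else 0 := by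
    intro s; split_ifs <;> omega
  simp only [topSum, hcol, Finset.sum_add_distrib, ← Finset.card_filter, hfilter,
    Nat.card_Icc, Nat.add_sub_cancel]

lemma part_mem {q : Multiset ℕ} {m : ℕ} (hm : 0 < m) (h : 0 < part q m) : part q m ∈ q := by
  have hle : m ≤ sCount q (part q m) := (le_sCount_iff_le_part hm h).mpr le_rfl
  have hlt : ¬ m ≤ sCount q (part q m + 1) := fun h' =>
    (le_sCount_iff_le_part hm (i := part q m + 1) (by omega)).mp h' |>.not_gt (Nat.lt_succ_self _)
  rw [← Multiset.count_pos]
  have := sCount_eq_count_add q (part q m)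
  omega

lemma sCount_eq_of_part_eq {c p : Multiset ℕ} (h : part c = part p) {i : ℕ} (hi : 0 < i) :
    sCount c i = sCount p i := by
  refine eq_of_forall_le_iff fun m => ?_
  rcases Nat.eq_zero_or_pos m with rfl | hm
  · simp
  · rw [le_sCount_iff_le_part hm hi, le_sCount_iff_le_part hm hi, h]

lemma eq_of_part_eq {c p : Multiset ℕ} (hc : ∀ a ∈ c, 0 < a) (hp : ∀ a ∈ p, 0 < a)
    (h : part c = part p) : c = p := by
  refine Multiset.ext.mpr fun a => ?_
  rcases Nat.eq_zero_or_pos a with rfl | ha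
  · rw [Multiset.count_eq_zero.mpr fun h0 => (hc 0 h0).false,
      Multiset.count_eq_zero.mpr fun h0 => (hp 0 h0).false]
  · have := sCount_eq_count_add c a
    have := sCount_eq_count_add p a
    have := sCount_eq_of_part_eq h ha
    have := sCount_eq_of_part_eq h (i := a + 1) (by omega)
    omega

lemma domLE_antisymm {c p : Multiset ℕ} (hc : ∀ a ∈ c, 0 < a) (hp : ∀ a ∈ p, 0 < a)
    (hsum : c.sum = p.sum) (hcp : domLE c p) (hpc : domLE p c) : c = p := by
  refine eq_of_part_eq hc hp (funext fun m => ?_)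
  cases m with
  | zero => rw [part_zero, part_zero, hsum]
  | succ k =>
    have := topSum_succ c k
    have := topSum_succ p k
    have := hcp k; have := hpc k; have := hcp (k + 1); have := hpc (k + 1)
    omega

end part

section parity

lemma IsSymplectic.filter {q : Multiset ℕ} (hq : IsSymplectic q) (P : ℕ → Prop)
    [DecidablePred P] : IsSymplectic (q.filter P) := by
  intro a ha
  rw [Multiset.count_filter]
  split_ifs
  · exact hq a ha
  · exact Even.zero

lemma IsSymplectic.even_sum {q : Multiset ℕ} (hq : IsSymplectic q) : Even q.sum := by
  classical
  rw [Finset.sum_multiset_count]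
  refine Finset.even_sum _ fun a _ => ?_
  rw [smul_eq_mul, Nat.even_mul]
  rcases Nat.even_or_odd a with ha | ha
  · exact .inr ha
  · exact .inl (hq a (Nat.odd_iff.mp ha))

lemma topSum_sCount (q : Multiset ℕ) (v : ℕ) :
    topSum q (sCount q v) = (q.filter (v ≤ ·)).sum := by
  rw [← sum_sCount (S := q.sum) fun a ha => Multiset.le_sum_of_mem (Multiset.mem_of_mem_filter ha)]
  refine Finset.sum_congr rfl fun i _ => ?_
  rw [sCount_filter_le, (sCount_antitone q).map_max]

/-- If `q_{m+1} < q_m`, the `m` largest parts are exactly the parts `≥ q_m`: a symplectic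
multiset, whose sum is even. -/
lemma IsSymplectic.part_succ_eq_of_odd_topSum {q : Multiset ℕ} (hq : IsSymplectic q) {m : ℕ}
    (hodd : Odd (topSum q m)) : part q (m + 1) = part q m := by
  refine (part_antitone q (Nat.le_add_right m 1)).antisymm (not_lt.mp fun hlt => ?_)
  have hm : 0 < m := Nat.pos_of_ne_zero fun h => by simp [h, topSum] at hodd
  have hv : 0 < part q m := by omega
  have hsc : sCount q (part q m) = m := by
    have hge := (le_sCount_iff_le_part hm hv).mpr le_rfl
    have hlt' : ¬ m + 1 ≤ sCount q (part q m) := fun h =>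
      ((le_sCount_iff_le_part (by omega) hv).mp h).not_gt hlt
    omega
  rw [← hsc, topSum_sCount] at hodd
  exact Nat.not_even_iff_odd.mpr hodd ((hq.filter _).even_sum)

lemma even_topSum {p : Multiset ℕ} (hp : ∀ a ∈ p, Even a) (m : ℕ) : Even (topSum p m) := by
  induction m with
  | zero => simp [topSum]
  | succ k ih =>
    rw [topSum_succ]
    refine ih.add ?_
    rcases Nat.eq_zero_or_pos (part p (k + 1)) with h | h
    · rw [h]; exact Even.zero
    · exact hp _ (part_mem (Nat.succ_pos k) h)

/-- At the first `m` with an excess of one the partial sum of `q` is odd, so `q_{m+1} = q_m` and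
the excess at `m + 1` is two. -/
lemma IsSymplectic.domLE_of_topSum_le_add_one {q p : Multiset ℕ} (hq : IsSymplectic q)
    (hp : ∀ a ∈ p, Even a) (h : ∀ m, topSum q m ≤ topSum p m + 1) : domLE q p := by
  intro m
  induction m with
  | zero => simp [topSum]
  | succ k ih =>
    by_contra hlt
    have hodd : Odd (topSum q (k + 1)) := by
      have heven := Nat.even_iff.mp (even_topSum hp (k + 1))
      have := h (k + 1)
      rw [Nat.odd_iff]
      omega
    have := hq.part_succ_eq_of_odd_topSum hodd
    have := topSum_succ q k
    have := topSum_succ q (k + 1)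
    have := topSum_succ p k
    have := topSum_succ p (k + 1)
    have := part_antitone p (show k + 1 ≤ k + 1 + 1 by omega)
    have := h (k + 1 + 1)
    omega

end parity

section moveBox

variable {a b : ℕ} {r : Multiset ℕ}

lemma topSum_of_card_le {q : Multiset ℕ} {m : ℕ} (h : Multiset.card q ≤ m) :
    topSum q m = q.sum := by
  conv_rhs => rw [← sum_sCount fun a ha => Multiset.le_sum_of_mem ha]
  exact Finset.sum_congr rfl fun i _ => min_eq_right ((sCount_le_card q i).trans h)

lemma sum_moveBox (hb : 0 < b) : ((a + 1) ::ₘ (b - 1) ::ₘ r).sum = (a ::ₘ b ::ₘ r).sum := by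
  simp only [Multiset.sum_cons]
  omega

lemma domLE_moveBox (hb : 0 < b) (hba : b ≤ a) (hr : ∀ x ∈ r, b ≤ x) :
    domLE (a ::ₘ b ::ₘ r) ((a + 1) ::ₘ (b - 1) ::ₘ r) := by
  intro m
  by_cases hm : Multiset.card r + 1 < m
  · rw [topSum_of_card_le (by simpa using hm), topSum_of_card_le (by simpa using hm), sum_moveBox hb]
  have hrb : sCount r b = Multiset.card r := congrArg _ (Multiset.filter_eq_self.mpr hr)
  rw [topSum, topSum, sum_moveBox hb]
  refine Finset.sum_le_sum fun i _ => ?_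
  simp only [sCount_cons]
  rcases eq_or_ne i b with rfl | hi
  · rw [hrb]
    split_ifs <;> omega
  · split_ifs <;> omega

lemma topSum_moveBox_le (hb : 0 < b) (hr : ∀ x ∈ r, x ≤ a) (m : ℕ) :
    topSum ((a + 1) ::ₘ (b - 1) ::ₘ r) m ≤ topSum (a ::ₘ b ::ₘ r) m + 1 := by
  have hra : sCount r (a + 1) = 0 := Multiset.card_eq_zero.mpr <|
    Multiset.filter_eq_nil.mpr fun x hx h => (hr x hx).not_gt h
  have hpt : ∀ i, min m (sCount ((a + 1) ::ₘ (b - 1) ::ₘ r) i) ≤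
      min m (sCount (a ::ₘ b ::ₘ r) i) + if i = a + 1 then 1 else 0 := by
    intro i
    simp only [sCount_cons]
    rcases eq_or_ne i (a + 1) with rfl | hi
    · rw [hra]
      split_ifs <;> omega
    · split_ifs <;> omega
  rw [topSum, topSum, sum_moveBox hb]
  calc _ ≤ ∑ i ∈ Finset.Icc 1 (a ::ₘ b ::ₘ r).sum,
        (min m (sCount (a ::ₘ b ::ₘ r) i) + if i = a + 1 then 1 else 0) :=
        Finset.sum_le_sum fun i _ => hpt i
    _ ≤ _ := by
      rw [Finset.sum_add_distrib, Finset.sum_ite_eq']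
      split_ifs <;> omega

end moveBox

section pPM

lemma maxPart_mem {q : Multiset ℕ} (h : q ≠ 0) : maxPart q ∈ q := by
  induction q using Multiset.induction_on with
  | empty => exact absurd rfl h
  | cons a q ih =>
    rcases eq_or_ne q 0 with rfl | hq
    · simp [maxPart]
    · simp only [maxPart, Multiset.sup_cons] at ih ⊢
      rcases max_choice a q.sup with hmax | hmax <;> rw [hmax]
      · exact Multiset.mem_cons_self a q
      · exact Multiset.mem_cons_of_mem (ih hq)

lemma minPart_eq {q : Multiset ℕ} {a : ℕ} (ha : a ∈ q) (h : ∀ x ∈ q, a ≤ x) : minPart q = a :=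
  IsLeast.csInf_eq ⟨ha, h⟩

lemma pPM_eq_self_or_moveBox {p : Multiset ℕ} (hp : ∀ a ∈ p, 2 ≤ a) :
    pPM p = p ∨ ∃ a b r, p = a ::ₘ b ::ₘ r ∧ pPM p = (a + 1) ::ₘ (b - 1) ::ₘ r ∧
      2 ≤ b ∧ b ≤ a ∧ ∀ x ∈ r, b ≤ x ∧ x ≤ a := by
  set M := maxPart p
  have hplus : pPlus p = (M + 1) ::ₘ p.erase M := rfl
  by_cases hs : p.erase M = 0
  · left
    have hmin : minPart (pPlus p) = M + 1 := by
      rw [hplus, hs]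
      exact minPart_eq (Multiset.mem_singleton_self _) (by simp)
    rcases eq_or_ne p 0 with rfl | hp0
    · have hM : M = 0 := Multiset.sup_zero
      rw [pPM, pMinus, hmin, if_pos (by omega), hplus, hs, Multiset.erase_cons_head]
    · have hM := maxPart_mem hp0
      have h2 := hp M hM
      rw [pPM, pMinus, hmin, if_neg (by omega), hplus, hs, Nat.add_sub_cancel,
        Multiset.erase_cons_head, ← hs, Multiset.cons_erase hM]
  · right
    have hM : M ∈ p := maxPart_mem fun h0 => hs (by rw [h0, Multiset.erase_zero])
    set b := minPart (p.erase M)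
    have hb : b ∈ p.erase M := Nat.sInf_mem (Multiset.exists_mem_of_ne_zero hs)
    have hbmin : ∀ x ∈ p.erase M, b ≤ x := fun x hx => Nat.sInf_le hx
    have hsM : ∀ x ∈ p.erase M, x ≤ M := fun x hx => Multiset.le_sup (Multiset.mem_of_mem_erase hx)
    have hs_eq := Multiset.cons_erase hb
    set r := (p.erase M).erase b
    have hb2 : 2 ≤ b := hp b (Multiset.mem_of_mem_erase hb)
    have hbM : b ≤ M := hsM b hb
    have hmin : minPart (pPlus p) = b := by
      rw [hplus]
      refine minPart_eq (Multiset.mem_cons_of_mem hb) fun x hx => ?_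
      rcases Multiset.mem_cons.mp hx with rfl | hx
      · omega
      · exact hbmin x hx
    refine ⟨M, b, r, ?_, ?_, hb2, hbM, fun x hx => ?_⟩
    · rw [hs_eq, Multiset.cons_erase hM]
    · rw [pPM, pMinus, hmin, if_neg (by omega), hplus, ← hs_eq,
        Multiset.erase_cons_tail_of_mem (Multiset.mem_cons_self b r), Multiset.erase_cons_head,
        Multiset.cons_swap]
    · have hx' := Multiset.mem_of_mem_erase hx
      exact ⟨hbmin x hx', hsM x hx'⟩

lemma sum_pPM {p : Multiset ℕ} (hp : ∀ a ∈ p, 2 ≤ a) : (pPM p).sum = p.sum := by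
  obtain h | ⟨a, b, r, rfl, h, hb, -⟩ := pPM_eq_self_or_moveBox hp
  · rw [h]
  · rw [h, sum_moveBox (by omega)]

lemma domLE_pPM {p : Multiset ℕ} (hp : ∀ a ∈ p, 2 ≤ a) : domLE p (pPM p) := by
  obtain h | ⟨a, b, r, rfl, h, hb, hba, hr⟩ := pPM_eq_self_or_moveBox hp
  · rw [h]; exact fun _ => le_rfl
  · rw [h]; exact domLE_moveBox (by omega) hba fun x hx => (hr x hx).1

lemma topSum_pPM_le {p : Multiset ℕ} (hp : ∀ a ∈ p, 2 ≤ a) (m : ℕ) :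
    topSum (pPM p) m ≤ topSum p m + 1 := by
  obtain h | ⟨a, b, r, rfl, h, hb, -, hr⟩ := pPM_eq_self_or_moveBox hp
  · rw [h]; exact Nat.le_succ _
  · rw [h]; exact topSum_moveBox_le (by omega) (fun x hx => (hr x hx).2) m

end pPM

theorem collapse_pPM_of_even_parts_general (n : ℕ) (p : Multiset ℕ)
    (hp : IsPartitionOf p (2 * n))
    (heven : ∀ a ∈ p, a % 2 = 0)
    (c : Multiset ℕ) (hc : IsSpCollapse (pPM p) c) :
    c = p := by
  have hpEven : ∀ a ∈ p, Even a := fun a ha => Nat.even_iff.mpr (heven a ha)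
  have hp2 : ∀ a ∈ p, 2 ≤ a := fun a ha => by have := hp.1 a ha; have := heven a ha; omega
  have hpSymp : IsSymplectic p := fun a ha => by
    rw [Multiset.count_eq_zero.mpr fun hmem => by have := heven a hmem; omega]
    exact Even.zero
  obtain ⟨⟨hcpos, hcsum⟩, hcSymp, hcle, hcmax⟩ := hc
  rw [sum_pPM hp2] at hcsum hcmax
  refine domLE_antisymm hcpos hp.1 hcsum ?_ (hcmax p ⟨hp.1, rfl⟩ hpSymp (domLE_pPM hp2))
  exact hcSymp.domLE_of_topSum_le_add_one hpEven fun m => (hcle m).trans (topSum_pPM_le hp2 m)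

/-- `p` an orthogonal partition of `2n` all of whose parts are even.
Then `(p^{+-})_{Sp_{2n}} = p`. -/
theorem collapse_pPM_of_even_parts (n : ℕ) (p : Multiset ℕ)
    (hp : IsPartitionOf p (2 * n)) (horth : IsOrthogonal p)
    (heven : ∀ a ∈ p, a % 2 = 0)
    (c : Multiset ℕ) (hc : IsSpCollapse (pPM p) c) :
    c = p :=
  collapse_pPM_of_even_parts_general n p hp heven c hc

end JiangWF
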